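/- arXiv:2206.10042 — 4 statements merged into one kernel-verified Lean document; each statement's English description precedes it below -/
import Mathlib

section
/- A relation λ : K → L (viewed as a subset of K × L) is branched if and only if its converse relation λᵀ : L → K is branched. -/
lemma aux {A B : Type*} (r : A → B → Prop)
    (h : ∀ a a' : A, {b : B | r a b} = {b : B | r a' b} ∨
        Disjoint {b : B | r a b} {b : B | r a' b}) :
    ∀ b b' : B, {a : A | r a b} = {a : A | r a b'} ∨
        Disjoint {a : A | r a b} {a : A | r a b'} := by
  intro b b'
  by_cases hd : Disjoint {a : A | r a b} {a : A | r a b'}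
  · exact Or.inr hd
  · left
    rw [Set.not_disjoint_iff] at hd
    obtain ⟨a, ha, ha'⟩ := hd
    ext c
    constructor
    · intro hc
      have := h c a
      rcases this with he | hdis
      · have : b' ∈ {b : B | r c b} := he ▸ ha'
        exact this
      · exact absurd (Set.not_disjoint_iff.mpr ⟨b, hc, ha⟩) (not_not.mpr hdis)
    · intro hc
      rcases h c a with he | hdis
      · have : b ∈ {b : B | r c b} := he ▸ ha
        exact this
      · exact absurd (Set.not_disjoint_iff.mpr ⟨b', hc, ha'⟩) (not_not.mpr hdis)

/-- A relation `lam ⊆ K × L` is branched if and only if its converse relation is branched. -/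
theorem stmt_0 {K L : Type*} [Fintype K] [Fintype L] (lam : Set (K × L)) :
    (∀ k k' : K, {l : L | (k, l) ∈ lam} = {l : L | (k', l) ∈ lam} ∨
        Disjoint {l : L | (k, l) ∈ lam} {l : L | (k', l) ∈ lam}) ↔
    (∀ l l' : L, {k : K | (k, l) ∈ lam} = {k : K | (k, l') ∈ lam} ∨
        Disjoint {k : K | (k, l) ∈ lam} {k : K | (k, l') ∈ lam}) := by
  constructor
  · exact aux (fun k l => (k, l) ∈ lam)
  · exact fun h => aux (fun l k => (k, l) ∈ lam) h
end

section
/- If a linear map U : H_A → H_B follows a route λ, and V : H_B → H_C follows a route μ, then the composition V ∘ U follows the route given by the Boolean matrix product μ · λ (where Boolean matrix multiplication uses OR for sum and AND for product). -/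
open scoped Classical

lemma aux_sum_comp {M N P : Type*} [AddCommGroup M] [Module ℂ M] [AddCommGroup N]
    [Module ℂ N] [AddCommGroup P] [Module ℂ P] {ι : Type*} (s : Finset ι)
    (f : ι → (N →ₗ[ℂ] P)) (g : M →ₗ[ℂ] N) :
    (∑ a ∈ s, f a) ∘ₗ g = ∑ a ∈ s, f a ∘ₗ g := by
  ext x; simp

lemma aux_comp_sum {M N P : Type*} [AddCommGroup M] [Module ℂ M] [AddCommGroup N]
    [Module ℂ N] [AddCommGroup P] [Module ℂ P] {ι : Type*} (s : Finset ι)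
    (f : ι → (M →ₗ[ℂ] N)) (g : N →ₗ[ℂ] P) :
    g ∘ₗ (∑ a ∈ s, f a) = ∑ a ∈ s, g ∘ₗ f a := by
  ext x; simp

/-- If `U` follows the route `lam` and `V` follows the route `mu` (with respect to
sectorisations of the spaces given by complete families of mutually annihilating
idempotents), then `V ∘ U` follows the Boolean matrix product of the routes. -/
theorem stmt_3 {HA HB HC : Type*}
    [AddCommGroup HA] [Module ℂ HA] [AddCommGroup HB] [Module ℂ HB]
    [AddCommGroup HC] [Module ℂ HC]
    {I J K : Type*} [Fintype I] [Fintype J] [Fintype K]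
    (P : I → (HA →ₗ[ℂ] HA)) (Q : J → (HB →ₗ[ℂ] HB)) (R : K → (HC →ₗ[ℂ] HC))
    (hPo : ∀ i i', P i ∘ₗ P i' = if i = i' then P i else 0)
    (hPs : ∑ i, P i = LinearMap.id)
    (hQo : ∀ j j', Q j ∘ₗ Q j' = if j = j' then Q j else 0)
    (hQs : ∑ j, Q j = LinearMap.id)
    (hRo : ∀ k k', R k ∘ₗ R k' = if k = k' then R k else 0)
    (hRs : ∑ k, R k = LinearMap.id)
    (lam : I → J → Prop) (mu : J → K → Prop)
    (U : HA →ₗ[ℂ] HB) (V : HB →ₗ[ℂ] HC)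
    (hU : U = ∑ i, ∑ j, if lam i j then Q j ∘ₗ U ∘ₗ P i else 0)
    (hV : V = ∑ j, ∑ k, if mu j k then R k ∘ₗ V ∘ₗ Q j else 0) :
    V ∘ₗ U = ∑ i, ∑ k, if ∃ j, lam i j ∧ mu j k then R k ∘ₗ (V ∘ₗ U) ∘ₗ P i else 0 := by
  classical
  have hQ : ∀ j j' (y : HB), Q j (Q j' y) = if j = j' then Q j y else 0 := by
    intro j j' y
    have := congrArg (fun f => f y) (hQo j j')
    by_cases h : j = j' <;> simpa [h] using this
  have hP : ∀ i i' (y : HA), P i (P i' y) = if i = i' then P i y else 0 := by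
    intro i i' y
    have := congrArg (fun f => f y) (hPo i i')
    by_cases h : i = i' <;> simpa [h] using this
  have hR : ∀ k k' (y : HC), R k (R k' y) = if k = k' then R k y else 0 := by
    intro k k' y
    have := congrArg (fun f => f y) (hRo k k')
    by_cases h : k = k' <;> simpa [h] using this
  set W : I → J → K → (HA →ₗ[ℂ] HC) := fun i j k => R k ∘ₗ V ∘ₗ Q j ∘ₗ U ∘ₗ P i with hW
  have hterm : ∀ (j : J) (k : K) (i : I) (j' : J),
      (if mu j k then R k ∘ₗ V ∘ₗ Q j else 0) ∘ₗ (if lam i j' then Q j' ∘ₗ U ∘ₗ P i else 0)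
      = if j' = j then (if lam i j ∧ mu j k then W i j k else 0) else 0 := by
    intro j k i j'
    by_cases hjj : j' = j
    · subst hjj
      by_cases hl : lam i j' <;> by_cases hm : mu j' k <;> simp [hl, hm, hW]
      ext x
      simp [LinearMap.comp_apply, hQ]
    · have hjj2 : ¬ j = j' := fun h => hjj h.symm
      ext x
      by_cases hl : lam i j' <;> by_cases hm : mu j k <;>
        simp [hl, hm, hjj, hjj2, hQ, LinearMap.comp_apply]
  have hVU : V ∘ₗ U = ∑ i, ∑ j, ∑ k, if lam i j ∧ mu j k then W i j k else 0 := by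
    conv_lhs => rw [hV, hU]
    simp only [aux_sum_comp, aux_comp_sum, hterm]
    simp only [Finset.sum_ite_irrel, Finset.sum_const_zero, Finset.sum_ite_eq,
      Finset.mem_univ, if_true]
  have hterm2 : ∀ (i : I) (k : K) (i' : I) (j : J) (k' : K),
      R k ∘ₗ (if lam i' j ∧ mu j k' then W i' j k' else 0) ∘ₗ P i
      = if i' = i then (if k' = k then (if lam i j ∧ mu j k then W i j k else 0) else 0) else 0 := by
    intro i k i' j k'
    by_cases hi : i' = i
    · subst hi
      by_cases hk : k' = k
      · subst hk
        by_cases hc : lam i' j ∧ mu j k' <;> simp [hc]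
        ext x
        simp [LinearMap.comp_apply, hW, hR, hP]
      · have hk2 : ¬ k = k' := fun h => hk h.symm
        by_cases hc : lam i' j ∧ mu j k' <;> simp [hc, hk]
        ext x
        simp [LinearMap.comp_apply, hW, hR, hP, hk, hk2]
    · have hi2 : ¬ i = i' := fun h => hi h.symm
      by_cases hc : lam i' j ∧ mu j k' <;> simp [hc, hi]
      ext x
      simp [LinearMap.comp_apply, hW, hR, hP, hi, hi2]
  have hblock : ∀ (i : I) (k : K),
      R k ∘ₗ (V ∘ₗ U) ∘ₗ P i = ∑ j, if lam i j ∧ mu j k then W i j k else 0 := by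
    intro i k
    rw [hVU]
    simp only [aux_sum_comp, aux_comp_sum, hterm2]
    calc ∑ i', ∑ j, ∑ k', (if i' = i then (if k' = k then (if lam i j ∧ mu j k then W i j k else 0) else 0) else 0)
        = ∑ j, ∑ i', ∑ k', (if i' = i then (if k' = k then (if lam i j ∧ mu j k then W i j k else 0) else 0) else 0) := Finset.sum_comm
      _ = ∑ j, ∑ k', ∑ i', (if i' = i then (if k' = k then (if lam i j ∧ mu j k then W i j k else 0) else 0) else 0) := Finset.sum_congr rfl fun j _ => Finset.sum_comm
      _ = ∑ j, if lam i j ∧ mu j k then W i j k else 0 := by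
          simp only [Finset.sum_ite_eq', Finset.mem_univ, if_true]
  simp only [hblock]
  rw [hVU]
  refine Finset.sum_congr rfl fun i _ => ?_
  rw [Finset.sum_comm]
  refine Finset.sum_congr rfl fun k _ => ?_
  by_cases h : ∃ j, lam i j ∧ mu j k
  · rw [if_pos h]
  · rw [if_neg h]
    exact Finset.sum_eq_zero fun j _ => if_neg fun hc => h ⟨j, hc⟩
end

section
/- Let H_A = ⊕_{i ∈ I} H_A^i and H_B = ⊕_{j ∈ J} H_B^j, and let λ be a branched route with branches (I^α, J^α), α in a finite index set. If a linear map U follows λ, then U decomposes as a direct sum U = Σ_α ι^α ∘ U^α ∘ p^α, where p^α is the orthogonal projection onto ⊕_{i ∈ I^α} H_A^i, ι^α is the inclusion of ⊕_{j ∈ J^α} H_B^j, and U^α : ⊕_{i ∈ I^α} H_A^i → ⊕_{j ∈ J^α} H_B^j. Moreover, U restricted to the practical input and output spaces is unitary if and only if every block U^α is unitary. -/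
/-!
Regroup `U = ∑ j, ∑ i, Q j ∘ U ∘ P i` by branch: a term outside every block `Jα a × Iα a` vanishes
because `U` follows the route, and the blocks do not overlap because the `Jα a` are disjoint.
The branch projections `p a = ∑ i ∈ Iα a, P i`, `q a = ∑ j ∈ Jα a, Q j` are again orthogonal
families of orthogonal projections, and the decomposition gives `U ∘ p a = q a ∘ U ∘ p a`.
So `U` sends the mutually orthogonal ranges of the `p a` into the mutually orthogonal ranges of
the `q a`, and by Pythagoras it is isometric from `⨁ ran p a` onto `⨁ ran q a` iff it is
isometric from each `ran p a` onto `ran q a`.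
-/

open scoped Classical
open Function

namespace OrthogonalIdempotents

variable {R I A : Type*} [Semiring R] {e : I → R}

lemma sum_mul_of_mem (he : OrthogonalIdempotents e) {i : I} {s : Finset I} (h : i ∈ s) :
    (∑ j ∈ s, e j) * e i = e i := by
  simp [Finset.sum_mul, he.mul_eq, h]

lemma sum_of_pairwise_disjoint (he : OrthogonalIdempotents e) {s : A → Finset I}
    (hs : Pairwise (Disjoint on s)) : OrthogonalIdempotents fun a ↦ ∑ i ∈ s a, e i where
  idem _ := he.isIdempotentElem_sum
  ortho a b hab := by
    simp only [Finset.sum_mul]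
    exact Finset.sum_eq_zero fun i hi ↦
      he.mul_sum_of_notMem (Finset.disjoint_left.mp (hs hab) hi)

section Module

variable {M : Type*} [AddCommMonoid M] [Module R M] {p : I → Module.End R M}

lemma apply_apply_self (hp : OrthogonalIdempotents p) (i : I) (x : M) : p i (p i x) = p i x :=
  LinearMap.congr_fun (hp.idem i).eq x

lemma apply_apply_of_ne (hp : OrthogonalIdempotents p) {i j : I} (hij : i ≠ j) (x : M) :
    p i (p j x) = 0 :=
  LinearMap.congr_fun (hp.ortho hij) x

lemma sum_apply_apply [Fintype I] (hp : OrthogonalIdempotents p) (i : I) (x : M) :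
    (∑ j, p j) (p i x) = p i x :=
  LinearMap.congr_fun (hp.sum_mul_of_mem (Finset.mem_univ i)) x

end Module

end OrthogonalIdempotents

theorem norm_sum_sq_of_pairwise_inner_eq_zero {𝕜 E A : Type*} [RCLike 𝕜]
    [NormedAddCommGroup E] [InnerProductSpace 𝕜 E] [Fintype A] {v : A → E}
    (h : Pairwise fun a b ↦ inner 𝕜 (v a) (v b) = 0) :
    ‖∑ a, v a‖ ^ 2 = ∑ a, ‖v a‖ ^ 2 := by
  have key : inner 𝕜 (∑ a, v a) (∑ a, v a) = ∑ a, inner 𝕜 (v a) (v a) := by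
    simp only [sum_inner, inner_sum]
    exact Finset.sum_congr rfl fun a _ ↦
      Finset.sum_eq_single a (fun b _ hba ↦ h hba) (by simp)
  simp only [inner_self_eq_norm_sq_to_K] at key
  exact_mod_cast key

theorem LinearMap.eq_sum_comp_blocks {R M N I J A : Type*} [Semiring R]
    [AddCommMonoid M] [Module R M] [AddCommMonoid N] [Module R N]
    [Fintype I] [Fintype J] [Fintype A]
    {P : I → Module.End R M} {Q : J → Module.End R N}
    (hP : ∑ i, P i = 1) (hQ : ∑ j, Q j = 1)
    {Iα : A → Finset I} {Jα : A → Finset J} (hJ : Pairwise (Disjoint on Jα))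
    (U : M →ₗ[R] N) (hU : ∀ i j, (¬ ∃ a, i ∈ Iα a ∧ j ∈ Jα a) → Q j ∘ₗ U ∘ₗ P i = 0) :
    U = ∑ a, (∑ j ∈ Jα a, Q j) ∘ₗ U ∘ₗ ∑ i ∈ Iα a, P i := by
  ext x
  let f : J × I → N := fun ji ↦ Q ji.1 (U (P ji.2 x))
  have hUx : U x = ∑ ji, f ji := by
    have hx : x = ∑ i, P i x := by simpa using LinearMap.congr_fun hP.symm x
    have hy : U x = ∑ j, Q j (U x) := by simpa using LinearMap.congr_fun hQ.symm (U x)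
    rw [Fintype.sum_prod_type, hy, hx]
    simp only [map_sum, f]
  have hblocks : ((Finset.univ : Finset A) : Set A).PairwiseDisjoint fun a ↦ Jα a ×ˢ Iα a :=
    fun a _ b _ hab ↦ Finset.disjoint_product.mpr (Or.inl (hJ hab))
  have hsupport : ∀ ji ∈ Finset.univ, ji ∉ Finset.univ.biUnion (fun a ↦ Jα a ×ˢ Iα a) →
      f ji = 0 := by
    rintro ⟨j, i⟩ - hji
    refine LinearMap.congr_fun (hU i j fun ⟨a, hi, hj⟩ ↦ hji ?_) x
    exact Finset.mem_biUnion.mpr ⟨a, Finset.mem_univ a, Finset.mem_product.mpr ⟨hj, hi⟩⟩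
  rw [hUx, ← Finset.sum_subset (Finset.subset_univ _) hsupport, Finset.sum_biUnion hblocks]
  simp only [LinearMap.sum_apply, LinearMap.comp_apply, map_sum, Finset.sum_product, f]
  exact Finset.sum_congr rfl fun a _ ↦ Finset.sum_comm

theorem LinearMap.image_setOf_apply_eq_subset {R M N : Type*} [Semiring R]
    [AddCommMonoid M] [Module R M] [AddCommMonoid N] [Module R N]
    {U : M →ₗ[R] N} {p : Module.End R M} {q : Module.End R N}
    (h : ∀ x, q (U (p x)) = U (p x)) : U '' {x | p x = x} ⊆ {y | q y = y} := by
  rintro _ ⟨x, hx, rfl⟩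
  show q (U x) = U x
  rw [← hx]
  exact h x

section InnerProduct

variable {𝕜 E F A : Type*} [RCLike 𝕜] [NormedAddCommGroup E] [InnerProductSpace 𝕜 E]
  [NormedAddCommGroup F] [InnerProductSpace 𝕜 F]

/-- `U` maps the range of `p` isometrically onto the range of `q`, ranges of idempotents being
their sets of fixed points. -/
def LinearMap.IsUnitaryBetween (U : E →ₗ[𝕜] F) (p : Module.End 𝕜 E) (q : Module.End 𝕜 F) :
    Prop :=
  (∀ x, ‖U (p x)‖ = ‖p x‖) ∧ U '' {x | p x = x} = {y | q y = y}

lemma OrthogonalIdempotents.inner_apply_eq_zero {p : A → Module.End 𝕜 E}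
    (hp : OrthogonalIdempotents p) (hsym : ∀ a, (p a).IsSymmetric) {a b : A} (hab : a ≠ b)
    (x y : E) : inner 𝕜 (p a x) (p b y) = 0 := by
  rw [hsym a x, ← Module.End.mul_apply, hp.ortho hab, LinearMap.zero_apply, inner_zero_right]

lemma OrthogonalIdempotents.norm_sum_apply_sq [Fintype A] {p : A → Module.End 𝕜 E}
    (hp : OrthogonalIdempotents p) (hsym : ∀ a, (p a).IsSymmetric) (x : A → E) :
    ‖∑ a, p a (x a)‖ ^ 2 = ∑ a, ‖p a (x a)‖ ^ 2 :=
  norm_sum_sq_of_pairwise_inner_eq_zero fun _ _ hab ↦ hp.inner_apply_eq_zero hsym hab _ _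

section BlockDecomposition

variable [Fintype A] {p : A → Module.End 𝕜 E} {q : A → Module.End 𝕜 F} {U : E →ₗ[𝕜] F}

lemma LinearMap.apply_comp_apply_of_eq_sum (hp : OrthogonalIdempotents p)
    (hU : U = ∑ a, q a ∘ₗ U ∘ₗ p a) (a : A) (x : E) : q a (U (p a x)) = U (p a x) := by
  conv_rhs => rw [hU]
  rw [LinearMap.sum_apply, Finset.sum_eq_single a (fun b _ hba ↦ ?_) (by simp)]
  · simp only [LinearMap.comp_apply, hp.apply_apply_self]
  · simp only [LinearMap.comp_apply, hp.apply_apply_of_ne hba, map_zero]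

lemma LinearMap.apply_comp_sum_apply (hp : OrthogonalIdempotents p)
    (hq : OrthogonalIdempotents q) (hU : U = ∑ a, q a ∘ₗ U ∘ₗ p a) (a : A) (x : E) :
    q a (U ((∑ b, p b) x)) = U (p a x) := by
  have hUsum : U ((∑ b, p b) x) = ∑ b, q b (U (p b x)) := by
    simp only [LinearMap.sum_apply, map_sum, U.apply_comp_apply_of_eq_sum hp hU]
  rw [hUsum, map_sum,
    Finset.sum_eq_single a (fun b _ hba ↦ hq.apply_apply_of_ne hba.symm _) (by simp),
    hq.apply_apply_self, U.apply_comp_apply_of_eq_sum hp hU]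

lemma LinearMap.IsUnitaryBetween.of_sum (hp : OrthogonalIdempotents p)
    (hq : OrthogonalIdempotents q) (hU : U = ∑ a, q a ∘ₗ U ∘ₗ p a)
    (h : U.IsUnitaryBetween (∑ a, p a) (∑ a, q a)) (a : A) :
    U.IsUnitaryBetween (p a) (q a) := by
  refine ⟨fun x ↦ ?_,
    (U.image_setOf_apply_eq_subset (U.apply_comp_apply_of_eq_sum hp hU a)).antisymm ?_⟩
  · simpa only [hp.sum_apply_apply] using h.1 (p a x)
  · intro y (hy : q a y = y)
    have hy' : (∑ b, q b) y = y := by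
      rw [← hy]
      exact hq.sum_apply_apply a y
    obtain ⟨x, hx, rfl⟩ : y ∈ U '' {x | (∑ b, p b) x = x} := by rwa [h.2]
    refine ⟨p a x, hp.apply_apply_self a x, ?_⟩
    rw [← U.apply_comp_sum_apply hp hq hU, hx, hy]

lemma LinearMap.IsUnitaryBetween.sum (hp : OrthogonalIdempotents p)
    (hq : OrthogonalIdempotents q) (hpsym : ∀ a, (p a).IsSymmetric)
    (hqsym : ∀ a, (q a).IsSymmetric) (hU : U = ∑ a, q a ∘ₗ U ∘ₗ p a)
    (h : ∀ a, U.IsUnitaryBetween (p a) (q a)) :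
    U.IsUnitaryBetween (∑ a, p a) (∑ a, q a) := by
  have hUp := U.apply_comp_apply_of_eq_sum hp hU
  refine ⟨fun x ↦ ?_, (U.image_setOf_apply_eq_subset fun x ↦ ?_).antisymm ?_⟩
  · rw [← sq_eq_sq₀ (norm_nonneg _) (norm_nonneg _)]
    calc ‖U ((∑ a, p a) x)‖ ^ 2 = ‖∑ a, q a (U (p a x))‖ ^ 2 := by
          simp only [LinearMap.sum_apply, map_sum, hUp]
      _ = ∑ a, ‖p a x‖ ^ 2 := by
          rw [hq.norm_sum_apply_sq hqsym]
          simp only [hUp, (h _).1]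
      _ = ‖(∑ a, p a) x‖ ^ 2 := by
          rw [LinearMap.sum_apply, hp.norm_sum_apply_sq hpsym fun _ ↦ x]
  · simp only [LinearMap.sum_apply _ q, U.apply_comp_sum_apply hp hq hU]
    rw [LinearMap.sum_apply, map_sum]
  · intro y (hy : (∑ a, q a) y = y)
    have hqy : ∀ a, q a y ∈ U '' {x | p a x = x} := fun a ↦
      (h a).2 ▸ hq.apply_apply_self a y
    choose x hx hUx using hqy
    refine ⟨∑ a, x a, ?_, ?_⟩
    · show (∑ a, p a) (∑ a, x a) = ∑ a, x a
      rw [map_sum]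
      refine Finset.sum_congr rfl fun a _ ↦ ?_
      rw [← hx a]
      exact hp.sum_apply_apply a (x a)
    · simpa only [map_sum, hUx, LinearMap.sum_apply] using hy

theorem LinearMap.isUnitaryBetween_sum_iff (hp : OrthogonalIdempotents p)
    (hq : OrthogonalIdempotents q) (hpsym : ∀ a, (p a).IsSymmetric)
    (hqsym : ∀ a, (q a).IsSymmetric) (hU : U = ∑ a, q a ∘ₗ U ∘ₗ p a) :
    U.IsUnitaryBetween (∑ a, p a) (∑ a, q a) ↔ ∀ a, U.IsUnitaryBetween (p a) (q a) :=
  ⟨fun h ↦ h.of_sum hp hq hU, .sum hp hq hpsym hqsym hU⟩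

end BlockDecomposition

end InnerProduct

theorem stmt_6_general {H K : Type*}
    [NormedAddCommGroup H] [InnerProductSpace ℂ H]
    [NormedAddCommGroup K] [InnerProductSpace ℂ K]
    {I J A : Type*} [Fintype I] [Fintype J] [Fintype A] [DecidableEq I] [DecidableEq J]
    (P : I → (H →ₗ[ℂ] H)) (Q : J → (K →ₗ[ℂ] K))
    (hPo : ∀ i i', P i ∘ₗ P i' = if i = i' then P i else 0)
    (hPs : ∑ i, P i = LinearMap.id)
    (hPsym : ∀ i, (P i).IsSymmetric)
    (hQo : ∀ j j', Q j ∘ₗ Q j' = if j = j' then Q j else 0)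
    (hQs : ∑ j, Q j = LinearMap.id)
    (hQsym : ∀ j, (Q j).IsSymmetric)
    (lam : I → J → Prop)
    (Iα : A → Finset I) (Jα : A → Finset J)
    (hIdisj : ∀ a b, a ≠ b → Disjoint (Iα a) (Iα b))
    (hJdisj : ∀ a b, a ≠ b → Disjoint (Jα a) (Jα b))
    (hlam : ∀ i j, lam i j ↔ ∃ a, i ∈ Iα a ∧ j ∈ Jα a)
    (U : H →ₗ[ℂ] K)
    (hU : ∀ i j, ¬ lam i j → Q j ∘ₗ U ∘ₗ P i = 0) :
    (U = ∑ a, (∑ j ∈ Jα a, Q j) ∘ₗ U ∘ₗ (∑ i ∈ Iα a, P i)) ∧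
    (((∀ x : H, ‖U ((∑ a, ∑ i ∈ Iα a, P i) x)‖ = ‖(∑ a, ∑ i ∈ Iα a, P i) x‖) ∧
        (⇑U '' {x : H | (∑ a, ∑ i ∈ Iα a, P i) x = x} =
          {y : K | (∑ a, ∑ j ∈ Jα a, Q j) y = y})) ↔
      ∀ a, (∀ x : H, ‖U ((∑ i ∈ Iα a, P i) x)‖ = ‖(∑ i ∈ Iα a, P i) x‖) ∧
        (⇑U '' {x : H | (∑ i ∈ Iα a, P i) x = x} = {y : K | (∑ j ∈ Jα a, Q j) y = y})) := by
  have hdec : U = ∑ a, (∑ j ∈ Jα a, Q j) ∘ₗ U ∘ₗ (∑ i ∈ Iα a, P i) :=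
    U.eq_sum_comp_blocks hPs hQs hJdisj fun i j h ↦ hU i j (mt (hlam i j).1 h)
  have hPα := (OrthogonalIdempotents.iff_mul_eq.mpr hPo).sum_of_pairwise_disjoint hIdisj
  have hQα := (OrthogonalIdempotents.iff_mul_eq.mpr hQo).sum_of_pairwise_disjoint hJdisj
  exact ⟨hdec, U.isUnitaryBetween_sum_iff hPα hQα
    (fun _ ↦ LinearMap.isSymmetric_sum _ fun i _ ↦ hPsym i)
    (fun _ ↦ LinearMap.isSymmetric_sum _ fun j _ ↦ hQsym j) hdec⟩

/-- Let `lam` be a branched route with branches `(Iα a, Jα a)`, realised by complete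
families of orthogonal (symmetric, mutually annihilating, idempotent) projections `P`, `Q`
on finite-dimensional Hilbert spaces.  If `U` follows `lam`, then `U` decomposes as a
direct sum of branch blocks, and `U` restricted to the practical input/output spaces is
unitary (norm-preserving with image exactly the practical output space) iff every branch
block is unitary. -/
theorem stmt_6 {H K : Type*}
    [NormedAddCommGroup H] [InnerProductSpace ℂ H] [FiniteDimensional ℂ H]
    [NormedAddCommGroup K] [InnerProductSpace ℂ K] [FiniteDimensional ℂ K]
    {I J A : Type*} [Fintype I] [Fintype J] [Fintype A] [DecidableEq I] [DecidableEq J]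
    (P : I → (H →ₗ[ℂ] H)) (Q : J → (K →ₗ[ℂ] K))
    (hPo : ∀ i i', P i ∘ₗ P i' = if i = i' then P i else 0)
    (hPs : ∑ i, P i = LinearMap.id)
    (hPsym : ∀ i, (P i).IsSymmetric)
    (hQo : ∀ j j', Q j ∘ₗ Q j' = if j = j' then Q j else 0)
    (hQs : ∑ j, Q j = LinearMap.id)
    (hQsym : ∀ j, (Q j).IsSymmetric)
    (lam : I → J → Prop)
    (Iα : A → Finset I) (Jα : A → Finset J)
    (hIne : ∀ a, (Iα a).Nonempty) (hJne : ∀ a, (Jα a).Nonempty)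
    (hIdisj : ∀ a b, a ≠ b → Disjoint (Iα a) (Iα b))
    (hJdisj : ∀ a b, a ≠ b → Disjoint (Jα a) (Jα b))
    (hlam : ∀ i j, lam i j ↔ ∃ a, i ∈ Iα a ∧ j ∈ Jα a)
    (U : H →ₗ[ℂ] K)
    (hU : ∀ i j, ¬ lam i j → Q j ∘ₗ U ∘ₗ P i = 0) :
    (U = ∑ a, (∑ j ∈ Jα a, Q j) ∘ₗ U ∘ₗ (∑ i ∈ Iα a, P i)) ∧
    (((∀ x : H, ‖U ((∑ a, ∑ i ∈ Iα a, P i) x)‖ = ‖(∑ a, ∑ i ∈ Iα a, P i) x‖) ∧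
        (⇑U '' {x : H | (∑ a, ∑ i ∈ Iα a, P i) x = x} =
          {y : K | (∑ a, ∑ j ∈ Jα a, Q j) y = y})) ↔
      ∀ a, (∀ x : H, ‖U ((∑ i ∈ Iα a, P i) x)‖ = ‖(∑ i ∈ Iα a, P i) x‖) ∧
        (⇑U '' {x : H | (∑ i ∈ Iα a, P i) x = x} = {y : K | (∑ j ∈ Jα a, Q j) y = y})) :=
  stmt_6_general P Q hPo hPs hPsym hQo hQs hQsym lam Iα Jα hIdisj hJdisj hlam U hU
end

section
/- The exchange map exch associated to a branched route λ follows λ: for every branch α with input space H_in^α and output space H_out^α, the map exch = Σ_α ι^α ∘ (swap_{in^α,out^α} ⊗ (⊗_{β≠α} Θ^β)) ∘ p^α, with Θ^β arbitrary unitaries H_out^β → H_in^β, is a well-defined linear map that vanishes on all blocks (i,j) with λ_i^j = 0, and it is unitary as a map from H_in^prac ⊗ (⊗_α H_out^α) to H_out^prac ⊗ (⊗_α H_in^α). -/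
open Matrix
open scoped Classical

/-- The exchange matrix of a branched route, on
`H_out ⊗ (⊗_a H_in^a) ← H_in ⊗ (⊗_a H_out^a)`: on a column `(ki, f)` with `ki` in branch
`a`, it places `f a` in the main output slot, `ki` in the `a`-th ancillary slot, and
applies `Θ b` to the `b`-th ancillary slot for `b ≠ a`; columns with `ki` in no branch
vanish. -/
noncomputable def exchMat
    {I J A : Type*} [Fintype A] [DecidableEq A]
    {Kin Kout : Type*} [DecidableEq Kin] [DecidableEq Kout]
    (sIn : Kin → I) (sOut : Kout → J)
    (Iα : A → Set I) (Jα : A → Set J)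
    (Θ : (a : A) → Matrix {k : Kin // sIn k ∈ Iα a} {k : Kout // sOut k ∈ Jα a} ℂ) :
    Matrix (Kout × ((a : A) → {k : Kin // sIn k ∈ Iα a}))
      (Kin × ((a : A) → {k : Kout // sOut k ∈ Jα a})) ℂ :=
  fun x y =>
    ∑ a : A,
      if h : sIn y.1 ∈ Iα a then
        (if (y.2 a : Kout) = x.1 ∧ x.2 a = ⟨y.1, h⟩ then
          ∏ b ∈ Finset.univ.erase a, Θ b (x.2 b) (y.2 b)
        else 0)
      else 0

private lemma mem_unique_of_disjoint {A I : Type*} {S : A → Set I}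
    (hd : ∀ a b, a ≠ b → Disjoint (S a) (S b)) {i : I} {a b : A}
    (ha : i ∈ S a) (hb : i ∈ S b) : a = b := by
  by_contra h
  exact Set.disjoint_left.mp (hd a b h) ha hb

private lemma exch_apply {I J A : Type*} [Fintype A] [DecidableEq A]
    {Kin Kout : Type*} [DecidableEq Kin] [DecidableEq Kout]
    {sIn : Kin → I} {sOut : Kout → J} {Iα : A → Set I} {Jα : A → Set J}
    (hIdisj : ∀ a b, a ≠ b → Disjoint (Iα a) (Iα b))
    (Θ : (a : A) → Matrix {k : Kin // sIn k ∈ Iα a} {k : Kout // sOut k ∈ Jα a} ℂ)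
    {a : A} {ki : Kin} (h : sIn ki ∈ Iα a)
    (ko : Kout) (g : (a : A) → {k : Kin // sIn k ∈ Iα a})
    (f : (a : A) → {k : Kout // sOut k ∈ Jα a}) :
    exchMat sIn sOut Iα Jα Θ (ko, g) (ki, f) =
      if (f a : Kout) = ko ∧ (g a : Kin) = ki then
        ∏ b ∈ Finset.univ.erase a, Θ b (g b) (f b)
      else 0 := by
  unfold exchMat
  rw [Finset.sum_eq_single a]
  · rw [dif_pos h]
    refine if_congr (and_congr_right fun _ => ?_) rfl rfl
    exact Subtype.ext_iff
  · intro b _ hb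
    rw [dif_neg]
    exact fun hb' => hb (mem_unique_of_disjoint hIdisj hb' h)
  · simp

private noncomputable def branchEquiv {A K I : Type*} (s : K → I) (S : A → Set I)
    (hd : ∀ a b, a ≠ b → Disjoint (S a) (S b)) :
    (Σ a : A, {k : K // s k ∈ S a}) ≃ {k : K // ∃ a, s k ∈ S a} where
  toFun x := ⟨x.2.1, x.1, x.2.2⟩
  invFun k := ⟨k.2.choose, k.1, k.2.choose_spec⟩
  left_inv x := by
    obtain ⟨a, k, hk⟩ := x
    have h : (⟨k, ⟨a, hk⟩⟩ : {k : K // ∃ a, s k ∈ S a}).2.choose = a :=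
      mem_unique_of_disjoint hd
        ((⟨k, ⟨a, hk⟩⟩ : {k : K // ∃ a, s k ∈ S a}).2.choose_spec) hk
    refine Sigma.ext h ((Subtype.heq_iff_coe_eq ?_).mpr rfl)
    intro x
    simp only []
    rw [show ((fun x : Σ a : A, {k : K // s k ∈ S a} => (⟨x.2.1, x.1, x.2.2⟩ : {k : K // ∃ a, s k ∈ S a})) ⟨a, ⟨k, hk⟩⟩).2.choose = a from h]
  right_inv k := rfl

private lemma exch_mul_conj_eq_one {I J A : Type*} [Fintype A] [DecidableEq A]
    {Kin Kout : Type*} [Fintype Kin] [Fintype Kout] [DecidableEq Kin] [DecidableEq Kout]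
    (sIn : Kin → I) (sOut : Kout → J) (Iα : A → Set I) (Jα : A → Set J)
    (hIdisj : ∀ a b, a ≠ b → Disjoint (Iα a) (Iα b))
    (hJdisj : ∀ a b, a ≠ b → Disjoint (Jα a) (Jα b))
    (Θ : (a : A) → Matrix {k : Kin // sIn k ∈ Iα a} {k : Kout // sOut k ∈ Jα a} ℂ)
    (hΘ₁ : ∀ a, Θ a * (Θ a)ᴴ = 1) :
    ((exchMat sIn sOut Iα Jα Θ).submatrix
        (Prod.map (Subtype.val : {k : Kout // ∃ a, sOut k ∈ Jα a} → Kout) id)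
        (Prod.map (Subtype.val : {k : Kin // ∃ a, sIn k ∈ Iα a} → Kin) id) *
      ((exchMat sIn sOut Iα Jα Θ).submatrix
        (Prod.map (Subtype.val : {k : Kout // ∃ a, sOut k ∈ Jα a} → Kout) id)
        (Prod.map (Subtype.val : {k : Kin // ∃ a, sIn k ∈ Iα a} → Kin) id))ᴴ = 1) := by
  ext ⟨ko, g⟩ ⟨ko', g'⟩
  rw [Matrix.mul_apply]
  rw [← Equiv.sum_comp (Equiv.prodCongr (branchEquiv sIn Iα hIdisj) (Equiv.refl _))]
  rw [Fintype.sum_prod_type]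
  rw [← Finset.univ_sigma_univ, Finset.sum_sigma]
  have hterm : ∀ (a : A) (k : {k : Kin // sIn k ∈ Iα a}),
      (∑ f : (b : A) → {k : Kout // sOut k ∈ Jα b},
        exchMat sIn sOut Iα Jα Θ (ko.1, g) (k.1, f) *
          star (exchMat sIn sOut Iα Jα Θ (ko'.1, g') (k.1, f))) =
      if g a = k then
        (if sOut ko.1 ∈ Jα a then
          (if ko.1 = ko'.1 ∧ (g' a : Kin) = (g a : Kin) then 1 else 0) *
            ∏ b ∈ Finset.univ.erase a, (if g b = g' b then (1 : ℂ) else 0)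
        else 0)
      else 0 := by
    intro a k
    have step : ∀ f : (b : A) → {k : Kout // sOut k ∈ Jα b},
        exchMat sIn sOut Iα Jα Θ (ko.1, g) (k.1, f) *
          star (exchMat sIn sOut Iα Jα Θ (ko'.1, g') (k.1, f)) =
        if g a = k then
          (if ((f a : Kout) = ko.1 ∧ ((f a : Kout) = ko'.1 ∧ (g' a : Kin) = (g a : Kin))) then
            (∏ b ∈ Finset.univ.erase a, Θ b (g b) (f b)) *
              star (∏ b ∈ Finset.univ.erase a, Θ b (g' b) (f b))
          else 0)
        else 0 := by
      intro f
      rw [exch_apply hIdisj Θ k.2, exch_apply hIdisj Θ k.2]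
      by_cases hk : g a = k
      · have hv : (k : Kin) = (g a : Kin) := by rw [hk]
        rw [if_pos hk]
        rw [apply_ite (star : ℂ → ℂ), star_zero, ite_zero_mul_ite_zero]
        simp only [hv, and_true, and_assoc]
      · rw [if_neg hk]
        have hne : ¬((f a : Kout) = ko.1 ∧ (g a : Kin) = (k : Kin)) :=
          fun h => hk (Subtype.ext h.2)
        rw [if_neg hne, zero_mul]
    rw [Finset.sum_congr rfl fun f _ => step f]
    rw [Finset.sum_ite_irrel, Finset.sum_const, smul_zero]
    refine if_congr Iff.rfl ?_ rfl
    -- compute the inner sum over f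
    set h : (b : A) → {k : Kout // sOut k ∈ Jα b} → ℂ := fun b x =>
      if b = a then
        (if (x : Kout) = ko.1 ∧ ((x : Kout) = ko'.1 ∧ (g' a : Kin) = (g a : Kin)) then 1 else 0)
      else Θ b (g b) x * star (Θ b (g' b) x) with hh
    have hfac : ∀ f : (b : A) → {k : Kout // sOut k ∈ Jα b},
        (if ((f a : Kout) = ko.1 ∧ ((f a : Kout) = ko'.1 ∧ (g' a : Kin) = (g a : Kin))) then
            (∏ b ∈ Finset.univ.erase a, Θ b (g b) (f b)) *
              star (∏ b ∈ Finset.univ.erase a, Θ b (g' b) (f b))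
          else 0) = ∏ b, h b (f b) := by
      intro f
      rw [← Finset.mul_prod_erase Finset.univ (fun b => h b (f b)) (Finset.mem_univ a)]
      have h1 : h a (f a) =
          (if (f a : Kout) = ko.1 ∧ ((f a : Kout) = ko'.1 ∧ (g' a : Kin) = (g a : Kin))
            then 1 else 0) := by rw [hh]; simp
      have h2 : (∏ b ∈ Finset.univ.erase a, h b (f b)) =
          (∏ b ∈ Finset.univ.erase a, Θ b (g b) (f b)) *
            star (∏ b ∈ Finset.univ.erase a, Θ b (g' b) (f b)) := by
        rw [star_prod, ← Finset.prod_mul_distrib]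
        refine Finset.prod_congr rfl fun b hb => ?_
        rw [hh]
        simp [(Finset.mem_erase.mp hb).1]
      rw [h1, h2, boole_mul]
    rw [Finset.sum_congr rfl fun f _ => hfac f, ← Fintype.prod_sum h]
    rw [← Finset.mul_prod_erase Finset.univ (fun b => ∑ x, h b x) (Finset.mem_univ a)]
    have hha : (∑ x, h a x) =
        if sOut ko.1 ∈ Jα a then
          (if ko.1 = ko'.1 ∧ (g' a : Kin) = (g a : Kin) then 1 else 0)
        else 0 := by
      have hax : ∀ x : {k : Kout // sOut k ∈ Jα a}, h a x =
          (if (x : Kout) = ko.1 ∧ ((x : Kout) = ko'.1 ∧ (g' a : Kin) = (g a : Kin))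
            then 1 else 0) := fun x => by simp [hh]
      by_cases hko : sOut ko.1 ∈ Jα a
      · rw [if_pos hko]
        rw [Finset.sum_congr rfl (fun x _ => show h a x =
            if x = ⟨ko.1, hko⟩ then
              (if ko.1 = ko'.1 ∧ (g' a : Kin) = (g a : Kin) then 1 else 0) else 0 by
          rw [hax]
          by_cases hx : x = ⟨ko.1, hko⟩
          · subst hx; simp
          · rw [if_neg hx, if_neg (fun hc => hx (Subtype.ext hc.1) :
              ¬((x : Kout) = ko.1 ∧ ((x : Kout) = ko'.1 ∧ (g' a : Kin) = (g a : Kin))))])]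
        rw [Finset.sum_eq_single (⟨ko.1, hko⟩ : {k : Kout // sOut k ∈ Jα a})
          (fun x _ hx => if_neg hx) (fun h => (h (Finset.mem_univ _)).elim), if_pos rfl]
      · rw [if_neg hko]
        refine Finset.sum_eq_zero fun x _ => ?_
        rw [hax, if_neg (fun hc => hko (hc.1 ▸ x.2) :
          ¬((x : Kout) = ko.1 ∧ ((x : Kout) = ko'.1 ∧ (g' a : Kin) = (g a : Kin))))]
    have hhb : ∀ b ∈ Finset.univ.erase a, (∑ x, h b x) =
        if g b = g' b then (1 : ℂ) else 0 := by
      intro b hb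
      have hba : b ≠ a := (Finset.mem_erase.mp hb).1
      have : (∑ x, h b x) = (Θ b * (Θ b)ᴴ) (g b) (g' b) := by
        rw [Matrix.mul_apply]
        refine Finset.sum_congr rfl fun x _ => ?_
        rw [hh, Matrix.conjTranspose_apply]
        simp [hba]
      rw [this, hΘ₁ b, Matrix.one_apply]
    rw [hha, Finset.prod_congr rfl hhb, ite_mul, zero_mul]
  simp only [Matrix.submatrix_apply, Matrix.conjTranspose_apply, Equiv.prodCongr_apply,
    Equiv.coe_refl, Prod.map_apply, id_eq, branchEquiv, Equiv.coe_fn_mk]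
  rw [Finset.sum_congr rfl fun a _ => Finset.sum_congr rfl fun k _ => hterm a k]
  have hcollapse : ∀ a : A,
      (∑ k : {k : Kin // sIn k ∈ Iα a}, if g a = k then
        (if sOut ko.1 ∈ Jα a then
          (if ko.1 = ko'.1 ∧ (g' a : Kin) = (g a : Kin) then 1 else 0) *
            ∏ b ∈ Finset.univ.erase a, (if g b = g' b then (1 : ℂ) else 0)
        else 0)
      else 0) =
      (if sOut ko.1 ∈ Jα a then
          (if ko.1 = ko'.1 ∧ (g' a : Kin) = (g a : Kin) then 1 else 0) *
            ∏ b ∈ Finset.univ.erase a, (if g b = g' b then (1 : ℂ) else 0)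
        else 0) := by
    intro a
    rw [Finset.sum_eq_single (g a) (fun k _ hk => if_neg fun h => hk h.symm)
      (fun h => (h (Finset.mem_univ _)).elim), if_pos rfl]
  rw [Finset.sum_congr rfl fun a _ => hcollapse a]
  obtain ⟨a0, ha0⟩ := ko.2
  rw [Finset.sum_eq_single a0 (fun a _ ha => by
      rw [if_neg]
      exact fun hc => ha (mem_unique_of_disjoint hJdisj hc ha0)) (by simp)]
  rw [if_pos ha0, Finset.prod_boole, ite_zero_mul_ite_zero, one_mul, Matrix.one_apply]
  have hiff : ((ko.1 = ko'.1 ∧ (g' a0 : Kin) = (g a0 : Kin)) ∧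
      ∀ b ∈ Finset.univ.erase a0, g b = g' b) ↔ ((ko, g) = (ko', g')) := by
    constructor
    · rintro ⟨⟨h1, h2⟩, h3⟩
      have hg : g = g' := funext fun b => by
        by_cases hb : b = a0
        · subst hb; exact (Subtype.ext h2).symm
        · exact h3 b (Finset.mem_erase.mpr ⟨hb, Finset.mem_univ b⟩)
      rw [Prod.ext_iff]
      exact ⟨Subtype.ext h1, hg⟩
    · intro h
      obtain ⟨h1, h2⟩ := Prod.ext_iff.mp h
      subst h2
      exact ⟨⟨congrArg Subtype.val h1, rfl⟩, fun b _ => rfl⟩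
  by_cases hP : (ko.1 = ko'.1 ∧ (g' a0 : Kin) = (g a0 : Kin)) ∧
      ∀ b ∈ Finset.univ.erase a0, g b = g' b
  · rw [if_pos hP, if_pos (hiff.mp hP)]
  · rw [if_neg hP, if_neg fun h => hP (hiff.mpr h)]


private lemma exch_dual {I J A : Type*} [Fintype A] [DecidableEq A]
    {Kin Kout : Type*} [Fintype Kin] [Fintype Kout] [DecidableEq Kin] [DecidableEq Kout]
    (sIn : Kin → I) (sOut : Kout → J) (Iα : A → Set I) (Jα : A → Set J)
    (hIdisj : ∀ a b, a ≠ b → Disjoint (Iα a) (Iα b))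
    (hJdisj : ∀ a b, a ≠ b → Disjoint (Jα a) (Jα b))
    (Θ : (a : A) → Matrix {k : Kin // sIn k ∈ Iα a} {k : Kout // sOut k ∈ Jα a} ℂ) :
    ((exchMat sIn sOut Iα Jα Θ).submatrix
        (Prod.map (Subtype.val : {k : Kout // ∃ a, sOut k ∈ Jα a} → Kout) id)
        (Prod.map (Subtype.val : {k : Kin // ∃ a, sIn k ∈ Iα a} → Kin) id))ᴴ =
    (exchMat sOut sIn Jα Iα (fun a => (Θ a)ᴴ)).submatrix
        (Prod.map (Subtype.val : {k : Kin // ∃ a, sIn k ∈ Iα a} → Kin) id)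
        (Prod.map (Subtype.val : {k : Kout // ∃ a, sOut k ∈ Jα a} → Kout) id) := by
  ext ⟨ki, f⟩ ⟨ko, g⟩
  simp only [Matrix.conjTranspose_apply, Matrix.submatrix_apply, Prod.map_apply, id_eq]
  obtain ⟨a, ha⟩ := ki.2
  obtain ⟨c, hc⟩ := ko.2
  rw [exch_apply hIdisj Θ ha, exch_apply hJdisj (fun b => (Θ b)ᴴ) hc]
  by_cases hac : a = c
  · subst hac
    by_cases h1 : (f a : Kout) = ko.1 ∧ (g a : Kin) = ki.1
    · rw [if_pos h1, if_pos (And.intro h1.2 h1.1), star_prod]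
      exact Finset.prod_congr rfl fun b _ => (Matrix.conjTranspose_apply _ _ _).symm
    · rw [if_neg h1,
        if_neg (fun h => h1 ⟨h.2, h.1⟩ :
          ¬((g a : Kin) = ki.1 ∧ (f a : Kout) = ko.1)), star_zero]
  · have hn1 : ¬((f a : Kout) = ko.1 ∧ (g a : Kin) = ki.1) := by
      rintro ⟨h1, -⟩
      have h2 := (f a).2
      rw [h1] at h2
      exact hac (mem_unique_of_disjoint hJdisj h2 hc)
    have hn2 : ¬((g c : Kin) = ki.1 ∧ (f c : Kout) = ko.1) := by
      rintro ⟨h1, -⟩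
      have h2 := (g c).2
      rw [h1] at h2
      exact hac (mem_unique_of_disjoint hIdisj ha h2)
    rw [if_neg hn1, if_neg hn2, star_zero]

/-- The exchange map of a branched route `lam` (with branches `(Iα a, Jα a)` and
arbitrary unitaries `Θ a : H_out^a → H_in^a`) follows `lam` — all sector blocks forbidden
by `lam` vanish (trivially extended on the ancillary factors) — and it is unitary as a
map from the practical input space (tensored with the ancillas) to the practical output
space (tensored with the ancillas). -/
theorem stmt_17
    {I J A : Type*} [Fintype I] [Fintype J] [Fintype A]
    [DecidableEq I] [DecidableEq J] [DecidableEq A]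
    {Kin Kout : Type*} [Fintype Kin] [Fintype Kout] [DecidableEq Kin] [DecidableEq Kout]
    (sIn : Kin → I) (sOut : Kout → J)
    (Iα : A → Set I) (Jα : A → Set J)
    (hIdisj : ∀ a b, a ≠ b → Disjoint (Iα a) (Iα b))
    (hJdisj : ∀ a b, a ≠ b → Disjoint (Jα a) (Jα b))
    (lam : I → J → Prop)
    (hlam : ∀ i j, lam i j ↔ ∃ a, i ∈ Iα a ∧ j ∈ Jα a)
    (Θ : (a : A) → Matrix {k : Kin // sIn k ∈ Iα a} {k : Kout // sOut k ∈ Jα a} ℂ)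
    (hΘ₁ : ∀ a, Θ a * (Θ a)ᴴ = 1) (hΘ₂ : ∀ a, (Θ a)ᴴ * Θ a = 1) :
    (∀ (ko : Kout) (ki : Kin), ¬ lam (sIn ki) (sOut ko) →
      ∀ g f, exchMat sIn sOut Iα Jα Θ (ko, g) (ki, f) = 0) ∧
    ((exchMat sIn sOut Iα Jα Θ).submatrix
        (Prod.map (Subtype.val : {k : Kout // ∃ a, sOut k ∈ Jα a} → Kout) id)
        (Prod.map (Subtype.val : {k : Kin // ∃ a, sIn k ∈ Iα a} → Kin) id) *
      ((exchMat sIn sOut Iα Jα Θ).submatrix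
        (Prod.map (Subtype.val : {k : Kout // ∃ a, sOut k ∈ Jα a} → Kout) id)
        (Prod.map (Subtype.val : {k : Kin // ∃ a, sIn k ∈ Iα a} → Kin) id))ᴴ = 1) ∧
    (((exchMat sIn sOut Iα Jα Θ).submatrix
        (Prod.map (Subtype.val : {k : Kout // ∃ a, sOut k ∈ Jα a} → Kout) id)
        (Prod.map (Subtype.val : {k : Kin // ∃ a, sIn k ∈ Iα a} → Kin) id))ᴴ *
      (exchMat sIn sOut Iα Jα Θ).submatrix
        (Prod.map (Subtype.val : {k : Kout // ∃ a, sOut k ∈ Jα a} → Kout) id)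
        (Prod.map (Subtype.val : {k : Kin // ∃ a, sIn k ∈ Iα a} → Kin) id) = 1) := by
  refine ⟨?_, ?_, ?_⟩
  · intro ko ki hlk g f
    unfold exchMat
    refine Finset.sum_eq_zero fun a _ => ?_
    split_ifs with h1 h2
    · refine absurd ((hlam _ _).mpr ⟨a, h1, ?_⟩) hlk
      have h3 := (f a).2
      rw [h2.1] at h3
      exact h3
    · rfl
    · rfl
  · exact exch_mul_conj_eq_one sIn sOut Iα Jα hIdisj hJdisj Θ hΘ₁
  · have hM := exch_dual sIn sOut Iα Jα hIdisj hJdisj Θ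
    have h2 := congrArg Matrix.conjTranspose hM
    rw [Matrix.conjTranspose_conjTranspose] at h2
    rw [hM, h2]
    exact exch_mul_conj_eq_one sOut sIn Jα Iα hJdisj hIdisj (fun a => (Θ a)ᴴ)
      (fun a => by rw [Matrix.conjTranspose_conjTranspose]; exact hΘ₂ a)
end
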